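/- For every n ≥ 7, the wheel W_{1,n} contains a nonlocal metric basis S' ⊆ V(C_n) such that: every gap of S' contains at most 4 vertices, at most one gap of S' contains 3 or more vertices, whenever a gap of S' contains at least 2 vertices each of its two neighboring gaps contains at most one vertex, and moreover S' has no gap of size exactly 3. -/

import Mathlib

/-- `X` is a nonlocal resolving set of `G`: every pair of distinct non-adjacent
vertices is resolved by some vertex of `X`. -/
def IsNLResolving {V : Type*} (G : SimpleGraph V) (X : Finset V) : Prop :=
  ∀ u v : V, u ≠ v → ¬ G.Adj u v → ∃ x ∈ X, G.dist u x ≠ G.dist v x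

/-- The nonlocal metric dimension of `G`. -/
noncomputable def nldim {V : Type*} [Fintype V] (G : SimpleGraph V) : ℕ :=
  sInf {n | ∃ X : Finset V, X.card = n ∧ IsNLResolving G X}

/-- `X` is a resolving set of `G`. -/
def IsResolving {V : Type*} (G : SimpleGraph V) (X : Finset V) : Prop :=
  ∀ u v : V, u ≠ v → ∃ x ∈ X, G.dist u x ≠ G.dist v x

/-- The metric dimension of `G`. -/
noncomputable def metricDim {V : Type*} [Fintype V] (G : SimpleGraph V) : ℕ :=
  sInf {n | ∃ X : Finset V, X.card = n ∧ IsResolving G X}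

/-- The corona product `G ⊙ H`: one copy of `G` and, for each vertex `g` of `G`,
a copy of `H` whose vertices are all joined to `g`. -/
def corona {V W : Type*} (G : SimpleGraph V) (H : SimpleGraph W) :
    SimpleGraph (V ⊕ V × W) :=
  SimpleGraph.fromRel (fun a b =>
    match a, b with
    | Sum.inl g, Sum.inl g' => G.Adj g g'
    | Sum.inl g, Sum.inr p => g = p.1
    | Sum.inr p, Sum.inr q => p.1 = q.1 ∧ H.Adj p.2 q.2
    | _, _ => False)

/-- The join `H + K₁`: a new vertex (`none`) adjacent to every vertex of `H`. -/
def joinK1 {W : Type*} (H : SimpleGraph W) : SimpleGraph (Option W) :=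
  SimpleGraph.fromRel (fun a b =>
    a = none ∨ ∃ w w', a = some w ∧ b = some w' ∧ H.Adj w w')

/-- The wheel `W_{1,n} = K₁ + Cₙ`, with central vertex `none`. -/
def wheel (n : ℕ) : SimpleGraph (Option (Fin n)) :=
  joinK1 (SimpleGraph.cycleGraph n)

/-- `A_{i,j}` is a gap of `X ⊆ V(Cₙ)`: `i, j ∈ X`, `i ≠ j`, and no vertex of
`{i+1, …, j-1}` (cyclically) lies in `X`. -/
def IsGap {n : ℕ} (X : Finset (Fin n)) (i j : Fin n) : Prop :=
  i ∈ X ∧ j ∈ X ∧ i ≠ j ∧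
    ∀ k : Fin n, 0 < (k - i).val → (k - i).val < (j - i).val → k ∉ X

/-- The number of vertices in the gap `A_{i,j} = {i+1, …, j-1}`. -/
def gapSize {n : ℕ} (i j : Fin n) : ℕ := (j - i).val - 1

/-- The edge cover number `β'(G)`: the least number of edges of `G` covering all
vertices. -/
noncomputable def edgeCoverNum {V : Type*} [Fintype V] (G : SimpleGraph V) : ℕ :=
  sInf {n | ∃ F : Finset (Sym2 V), F.card = n ∧ ↑F ⊆ G.edgeSet ∧ ∀ v : V, ∃ e ∈ F, v ∈ e}

/-!
Every two rim vertices of the wheel are at distance at most two and the hub is at distance one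
from all of them, so the hub resolves nothing, and a set `S` of rim vertices resolves two
non-adjacent rim vertices `u, v` exactly when it meets `N[u] ∆ N[v]`. On the cycle this splits
into two conditions: `S` meets every punctured ball `{u - 2, u - 1, u + 1, u + 2}` (the pairs
`u - 1, u + 1`), and the vertices not dominated by `S` are pairwise adjacent (the pairs with
disjoint closed neighbourhoods). The first bounds gaps by four vertices and forbids two neighbouring gaps
of two or more vertices; the second allows at most one gap of three or more vertices, since such a
gap leaves its second vertex undominated. A three-vertex gap is removed, without changing the size
of a basis, by moving its right end one step to the left or to the right, according to whether the
next gap has a single vertex or not.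
-/

namespace SimpleGraph

variable {W : Type*} (H : SimpleGraph W)

def closedNeighborSet (u : W) : Set W := insert u (H.neighborSet u)

def Dominates (S : Finset W) (u : W) : Prop := ∃ x ∈ S, x ∈ H.closedNeighborSet u

def SeparatesClosedNeighborSets (S : Finset W) : Prop :=
  ∀ u v, u ≠ v → ¬ H.Adj u v →
    ∃ x ∈ S, x ∈ symmDiff (H.closedNeighborSet u) (H.closedNeighborSet v)

variable {H}

@[simp]
lemma mem_closedNeighborSet {u x : W} : x ∈ H.closedNeighborSet u ↔ x = u ∨ H.Adj u x := by
  simp [closedNeighborSet]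

lemma mem_closedNeighborSet_comm {u x : W} :
    x ∈ H.closedNeighborSet u ↔ u ∈ H.closedNeighborSet x := by
  simp [eq_comm, H.adj_comm]

lemma Dominates.of_erase_subset [DecidableEq W] {S T : Finset W} {j z : W} (hz : H.Dominates S z)
    (hST : S.erase j ⊆ T) (hj : j ∈ H.closedNeighborSet z → H.Dominates T z) :
    H.Dominates T z := by
  obtain ⟨x, hxS, hxz⟩ := hz
  by_cases hxj : x = j
  · exact hj (hxj ▸ hxz)
  · exact ⟨x, hST (Finset.mem_erase.2 ⟨hxj, hxS⟩), hxz⟩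

lemma separatesClosedNeighborSets_univ [Fintype W] : H.SeparatesClosedNeighborSets Finset.univ :=
  fun u v huv hadj =>
    ⟨u, Finset.mem_univ u, Or.inl ⟨by simp, by simp [huv, H.adj_comm, hadj]⟩⟩

lemma SeparatesClosedNeighborSets.isClique_undominated {S : Finset W}
    (hS : H.SeparatesClosedNeighborSets S) : H.IsClique {u | ¬ H.Dominates S u} := by
  intro u hu v hv huv
  by_contra hadj
  obtain ⟨x, hxS, hx⟩ := hS u v huv hadj
  rcases hx with ⟨hxu, -⟩ | ⟨hxv, -⟩
  exacts [hu ⟨x, hxS, hxu⟩, hv ⟨x, hxS, hxv⟩]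

end SimpleGraph

open SimpleGraph

section JoinK1

variable {W : Type*} (H : SimpleGraph W)

lemma joinK1_adj_none_some (w : W) : (joinK1 H).Adj none (some w) :=
  ⟨by simp, Or.inl (Or.inl rfl)⟩

lemma joinK1_adj_some_some {a b : W} : (joinK1 H).Adj (some a) (some b) ↔ H.Adj a b := by
  simp only [joinK1, fromRel_adj, ne_eq, Option.some.injEq, reduceCtorEq, false_or, exists_and_left,
    exists_eq_left', H.adj_comm b a, or_self, and_iff_right_iff_imp]
  exact H.ne_of_adj

lemma joinK1_dist_some_none (a : W) : (joinK1 H).dist (some a) none = 1 :=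
  dist_eq_one_iff_adj.2 (joinK1_adj_none_some H a).symm

lemma joinK1_dist_some_some_of_not_adj {a b : W} (hab : a ≠ b) (hadj : ¬ H.Adj a b) :
    (joinK1 H).dist (some a) (some b) = 2 := by
  let w : (joinK1 H).Walk (some a) (some b) :=
    .cons (joinK1_adj_none_some H a).symm (.cons (joinK1_adj_none_some H b) .nil)
  have hle : (joinK1 H).dist (some a) (some b) ≤ 2 := dist_le w
  have hne0 : (joinK1 H).dist (some a) (some b) ≠ 0 := by
    rw [Ne, Reachable.dist_eq_zero_iff ⟨w⟩]
    simpa using hab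
  have hne1 : (joinK1 H).dist (some a) (some b) ≠ 1 := by
    rwa [Ne, dist_eq_one_iff_adj, joinK1_adj_some_some]
  omega

open Classical in
lemma joinK1_dist_some_some (a b : W) :
    (joinK1 H).dist (some a) (some b) = if a = b then 0 else if H.Adj a b then 1 else 2 := by
  split_ifs with hab hadj
  · rw [hab, dist_self]
  · exact dist_eq_one_iff_adj.2 ((joinK1_adj_some_some H).2 hadj)
  · exact joinK1_dist_some_some_of_not_adj H hab hadj

lemma joinK1_dist_ne_iff {u v : W} (huv : u ≠ v) (hadj : ¬ H.Adj u v) (x : W) :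
    (joinK1 H).dist (some u) (some x) ≠ (joinK1 H).dist (some v) (some x) ↔
      x ∈ symmDiff (H.closedNeighborSet u) (H.closedNeighborSet v) := by
  rw [joinK1_dist_some_some, joinK1_dist_some_some, Set.mem_symmDiff, mem_closedNeighborSet,
    mem_closedNeighborSet]
  by_cases hu : u = x <;> by_cases hv : v = x
  · exact absurd (hu.trans hv.symm) huv
  · subst hu
    have hvu : ¬ H.Adj v u := fun h => hadj h.symm
    simp [hv, hvu, Ne.symm hv]
  · subst hv
    simp [hu, hadj, Ne.symm hu]
  · by_cases hux : H.Adj u x <;> by_cases hvx : H.Adj v x <;>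
      simp [hu, hv, hux, hvx, Ne.symm hu, Ne.symm hv]

lemma isNLResolving_joinK1_iff (X : Finset (Option W)) :
    IsNLResolving (joinK1 H) X ↔ H.SeparatesClosedNeighborSets X.eraseNone := by
  constructor
  · intro hX u v huv hadj
    obtain ⟨x, hxX, hx⟩ := hX (some u) (some v) (by simpa using huv)
      (by rwa [joinK1_adj_some_some])
    cases x with
    | none => exact absurd (by rw [joinK1_dist_some_none, joinK1_dist_some_none]) hx
    | some x => exact ⟨x, Finset.mem_eraseNone.2 hxX, (joinK1_dist_ne_iff H huv hadj x).1 hx⟩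
  · intro hS u v huv hadj
    cases u with
    | none => cases v with
      | none => exact absurd rfl huv
      | some b => exact absurd (joinK1_adj_none_some H b) hadj
    | some a => cases v with
      | none => exact absurd (joinK1_adj_none_some H a).symm hadj
      | some b =>
        have hab : a ≠ b := by simpa using huv
        have hadj' : ¬ H.Adj a b := by rwa [joinK1_adj_some_some] at hadj
        obtain ⟨x, hxS, hx⟩ := hS a b hab hadj'
        exact ⟨some x, Finset.mem_eraseNone.1 hxS, (joinK1_dist_ne_iff H hab hadj' x).2 hx⟩

end JoinK1

section Cycle

open Fin.CommRing

variable {n : ℕ} [NeZero n]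

lemma Fin.natCast_ne_zero_of_lt {k : ℕ} (hk0 : 0 < k) (hkn : k < n) : (k : Fin n) ≠ 0 := by
  rw [Ne, Fin.natCast_eq_zero]
  exact fun h => absurd (Nat.le_of_dvd hk0 h) (by omega)

lemma Fin.ne_of_sub_eq_natCast {a b : Fin n} {k : ℕ} (hk0 : 0 < k) (hkn : k < n)
    (h : a - b = k) : a ≠ b := by
  rintro rfl
  exact Fin.natCast_ne_zero_of_lt hk0 hkn (by rw [← h, sub_self])

lemma cycleGraph_adj_iff (hn : 2 ≤ n) {u v : Fin n} :
    (cycleGraph n).Adj u v ↔ u = v + 1 ∨ v = u + 1 := by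
  obtain ⟨m, rfl⟩ : ∃ m, n = m + 2 := ⟨n - 2, by omega⟩
  rw [cycleGraph_adj, sub_eq_iff_eq_add, sub_eq_iff_eq_add, add_comm 1, add_comm 1]

lemma mem_closedNeighborSet_cycleGraph (hn : 2 ≤ n) {u x : Fin n} :
    x ∈ (cycleGraph n).closedNeighborSet u ↔ x = u - 1 ∨ x = u ∨ x = u + 1 := by
  rw [mem_closedNeighborSet, cycleGraph_adj_iff hn, eq_sub_iff_add_eq, eq_comm (a := u)]
  tauto

lemma notMem_closedNeighborSet_cycleGraph {u x : Fin n} {k : ℕ} (h : x - u = k) (hk2 : 2 ≤ k)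
    (hkn : k + 2 ≤ n) : x ∉ (cycleGraph n).closedNeighborSet u := by
  rw [mem_closedNeighborSet_cycleGraph (by omega)]
  rintro (rfl | rfl | rfl)
  · exact Fin.natCast_ne_zero_of_lt (n := n) (k := k + 1) (by omega) (by omega)
      (by push_cast; linear_combination -h)
  · exact Fin.natCast_ne_zero_of_lt (n := n) (k := k) (by omega) (by omega)
      (by rw [← h, sub_self])
  · exact Fin.natCast_ne_zero_of_lt (n := n) (k := k - 1) (by omega) (by omega)
      (by rw [Nat.cast_sub (by omega)]; push_cast; linear_combination -h)

def puncturedBall (u : Fin n) : Finset (Fin n) := {u - 2, u - 1, u + 1, u + 2}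

@[simp]
lemma mem_puncturedBall {u x : Fin n} :
    x ∈ puncturedBall u ↔ x = u - 2 ∨ x = u - 1 ∨ x = u + 1 ∨ x = u + 2 := by
  simp [puncturedBall]

def HitsPuncturedBalls (S : Finset (Fin n)) : Prop := ∀ u, ∃ x ∈ S, x ∈ puncturedBall u

lemma HitsPuncturedBalls.of_erase_subset {S T : Finset (Fin n)} {j : Fin n}
    (hS : HitsPuncturedBalls S) (hST : S.erase j ⊆ T)
    (hj : ∀ u, j ∈ puncturedBall u → ∃ x ∈ T, x ∈ puncturedBall u) :
    HitsPuncturedBalls T := by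
  intro u
  obtain ⟨x, hxS, hxu⟩ := hS u
  by_cases hxj : x = j
  · exact hj u (hxj ▸ hxu)
  · exact ⟨x, hST (Finset.mem_erase.2 ⟨hxj, hxS⟩), hxu⟩

lemma eq_of_mem_closedNeighborSet_cycleGraph (hn : 2 ≤ n) {u v x : Fin n}
    (hxu : x ∈ (cycleGraph n).closedNeighborSet u)
    (hxv : x ∈ (cycleGraph n).closedNeighborSet v) :
    v = u - 2 ∨ v = u - 1 ∨ v = u ∨ v = u + 1 ∨ v = u + 2 := by
  rw [mem_closedNeighborSet_cycleGraph hn] at hxu hxv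
  rcases hxu with rfl | rfl | rfl <;> rcases hxv with h | h | h <;>
    first
    | exact Or.inl (by linear_combination -h)
    | exact Or.inr (Or.inl (by linear_combination -h))
    | exact Or.inr (Or.inr (Or.inl (by linear_combination -h)))
    | exact Or.inr (Or.inr (Or.inr (Or.inl (by linear_combination -h))))
    | exact Or.inr (Or.inr (Or.inr (Or.inr (by linear_combination -h))))

lemma HitsPuncturedBalls.exists_mem_symmDiff (hn : 5 ≤ n) {S : Finset (Fin n)}
    (hS : HitsPuncturedBalls S) (u : Fin n) :
    ∃ x ∈ S, x ∈ symmDiff ((cycleGraph n).closedNeighborSet u)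
      ((cycleGraph n).closedNeighborSet (u + 2)) := by
  obtain ⟨x, hxS, hx⟩ := hS (u + 1)
  refine ⟨x, hxS, ?_⟩
  have hN : ∀ {w y : Fin n},
      y ∈ (cycleGraph n).closedNeighborSet w ↔ y = w - 1 ∨ y = w ∨ y = w + 1 :=
    mem_closedNeighborSet_cycleGraph (by omega)
  rw [mem_puncturedBall] at hx
  rw [Set.mem_symmDiff]
  rcases hx with rfl | rfl | rfl | rfl
  · refine Or.inl ⟨hN.2 (Or.inl (by ring)), ?_⟩
    rw [mem_closedNeighborSet_comm]
    exact notMem_closedNeighborSet_cycleGraph (k := 3) (by push_cast; ring) (by norm_num)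
      (by omega)
  · refine Or.inl ⟨hN.2 (Or.inr (Or.inl (by ring))), ?_⟩
    rw [mem_closedNeighborSet_comm]
    exact notMem_closedNeighborSet_cycleGraph (k := 2) (by push_cast; ring) le_rfl (by omega)
  · exact Or.inr ⟨hN.2 (Or.inr (Or.inl (by ring))),
      notMem_closedNeighborSet_cycleGraph (k := 2) (by push_cast; ring) le_rfl (by omega)⟩
  · exact Or.inr ⟨hN.2 (Or.inr (Or.inr (by ring))),
      notMem_closedNeighborSet_cycleGraph (k := 3) (by push_cast; ring) (by omega) (by omega)⟩

lemma SimpleGraph.SeparatesClosedNeighborSets.hitsPuncturedBalls (hn : 4 ≤ n) {S : Finset (Fin n)}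
    (hS : (cycleGraph n).SeparatesClosedNeighborSets S) : HitsPuncturedBalls S := by
  intro u
  have hfar : u + 1 ∉ (cycleGraph n).closedNeighborSet (u - 1) :=
    notMem_closedNeighborSet_cycleGraph (k := 2) (by push_cast; ring) le_rfl (by omega)
  obtain ⟨x, hxS, hx⟩ := hS (u - 1) (u + 1) (fun h => hfar (by simp [h]))
    (fun h => hfar (mem_closedNeighborSet.2 (Or.inr h)))
  refine ⟨x, hxS, ?_⟩
  rw [Set.mem_symmDiff, mem_closedNeighborSet_cycleGraph (by omega),
    mem_closedNeighborSet_cycleGraph (by omega)] at hx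
  rw [mem_puncturedBall]
  rcases hx with ⟨rfl | rfl | rfl, hx⟩ | ⟨rfl | rfl | rfl, hx⟩
  · exact Or.inl (by ring)
  · exact Or.inr (Or.inl rfl)
  · exact absurd (Or.inl (by ring)) hx
  · exact absurd (Or.inr (Or.inr (by ring))) hx
  · exact Or.inr (Or.inr (Or.inl rfl))
  · exact Or.inr (Or.inr (Or.inr (by ring)))

/-- Only `u ± 2` share a neighbour with `u` without being adjacent to it, and the pair
`(u, u + 2)` is told apart exactly by `puncturedBall (u + 1)`; every other non-adjacent pair has
disjoint closed neighbourhoods. -/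
theorem separatesClosedNeighborSets_cycleGraph_iff (hn : 5 ≤ n) (S : Finset (Fin n)) :
    (cycleGraph n).SeparatesClosedNeighborSets S ↔
      HitsPuncturedBalls S ∧ (cycleGraph n).IsClique {u | ¬ (cycleGraph n).Dominates S u} := by
  refine ⟨fun hS => ⟨hS.hitsPuncturedBalls (by omega), hS.isClique_undominated⟩,
    fun ⟨hB, hcl⟩ u v huv hadj => ?_⟩
  by_cases hv : v = u + 2
  · exact hv ▸ hB.exists_mem_symmDiff hn u
  by_cases hu : u = v + 2
  · obtain ⟨x, hxS, hx⟩ := hB.exists_mem_symmDiff hn v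
    exact ⟨x, hxS, by rwa [symmDiff_comm, hu]⟩
  have hdom : (cycleGraph n).Dominates S u ∨ (cycleGraph n).Dominates S v := by
    by_contra! h
    exact hadj (hcl h.1 h.2 huv)
  have hadj' := (cycleGraph_adj_iff (by omega)).not.1 hadj
  have hfar : ∀ {x}, x ∈ (cycleGraph n).closedNeighborSet u →
      x ∉ (cycleGraph n).closedNeighborSet v := by
    intro x hxu hxv
    rcases eq_of_mem_closedNeighborSet_cycleGraph (by omega) hxu hxv with h | h | h | h | h
    · exact hu (by linear_combination -h)
    · exact hadj' (Or.inl (by linear_combination -h))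
    · exact huv h.symm
    · exact hadj' (Or.inr h)
    · exact hv h
  rcases hdom with ⟨x, hxS, hx⟩ | ⟨x, hxS, hx⟩
  · exact ⟨x, hxS, Or.inl ⟨hx, hfar hx⟩⟩
  · exact ⟨x, hxS, Or.inr ⟨hx, fun hxu => hfar hxu hx⟩⟩

end Cycle

section Gap

open Fin.CommRing

variable {n : ℕ} [NeZero n] {S : Finset (Fin n)} {i j : Fin n}

lemma IsGap.val_sub_pos (hg : IsGap S i j) : 0 < (j - i).val :=
  Fin.pos_iff_ne_zero.2 (sub_ne_zero.2 (Ne.symm hg.2.2.1))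

lemma IsGap.notMem_of_sub_eq (hg : IsGap S i j) {x : Fin n} {k : ℕ} (hx : x - i = k)
    (hk0 : 0 < k) (hk : k < (j - i).val) : x ∉ S := by
  have hval : (x - i).val = k := by
    rw [hx, Fin.val_natCast, Nat.mod_eq_of_lt (hk.trans (j - i).isLt)]
  exact hg.2.2.2 x (by omega) (by omega)

lemma IsGap.notMem_of_sub_eq' (hg : IsGap S i j) {x : Fin n} {k : ℕ} (hx : j - x = k)
    (hk0 : 0 < k) (hk : k < (j - i).val) : x ∉ S :=
  hg.notMem_of_sub_eq (k := (j - i).val - k)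
    (by rw [Nat.cast_sub hk.le, Fin.cast_val_eq_self, ← hx]; ring) (by omega) (by omega)

lemma IsGap.right_unique {j' : Fin n} (hg : IsGap S i j) (hg' : IsGap S i j') : j = j' := by
  rcases lt_trichotomy (j - i).val (j' - i).val with h | h | h
  · exact absurd hg.2.1 (hg'.notMem_of_sub_eq (Fin.cast_val_eq_self _).symm hg.val_sub_pos h)
  · exact sub_left_inj.1 (Fin.val_injective h)
  · exact absurd hg'.2.1 (hg.notMem_of_sub_eq (Fin.cast_val_eq_self _).symm hg'.val_sub_pos h)

lemma IsGap.not_dominates (hg : IsGap S i j) (h4 : 4 ≤ (j - i).val) :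
    ¬ (cycleGraph n).Dominates S (i + 2) := by
  rintro ⟨x, hxS, hx⟩
  rw [mem_closedNeighborSet_cycleGraph (by have := (j - i).isLt; omega)] at hx
  rcases hx with rfl | rfl | rfl
  · exact hg.notMem_of_sub_eq (k := 1) (by push_cast; ring) one_pos (by omega) hxS
  · exact hg.notMem_of_sub_eq (k := 2) (by push_cast; ring) two_pos (by omega) hxS
  · exact hg.notMem_of_sub_eq (k := 3) (by push_cast; ring) three_pos (by omega) hxS

theorem gapSize_le_four (hS : HitsPuncturedBalls S) (hg : IsGap S i j) : gapSize i j ≤ 4 := by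
  unfold gapSize
  by_contra! hlong
  obtain ⟨x, hxS, hx⟩ := hS (i + 3)
  rw [mem_puncturedBall] at hx
  rcases hx with rfl | rfl | rfl | rfl
  · exact hg.notMem_of_sub_eq (k := 1) (by push_cast; ring) one_pos (by omega) hxS
  · exact hg.notMem_of_sub_eq (k := 2) (by push_cast; ring) two_pos (by omega) hxS
  · exact hg.notMem_of_sub_eq (k := 4) (by push_cast; ring) four_pos (by omega) hxS
  · exact hg.notMem_of_sub_eq (k := 5) (by push_cast; ring) (by norm_num) (by omega) hxS

theorem gapSize_le_one_or (hS : HitsPuncturedBalls S) {h : Fin n} (hg₁ : IsGap S h i)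
    (hg₂ : IsGap S i j) : gapSize h i ≤ 1 ∨ gapSize i j ≤ 1 := by
  unfold gapSize
  by_contra! hlong
  obtain ⟨x, hxS, hx⟩ := hS i
  rw [mem_puncturedBall] at hx
  rcases hx with rfl | rfl | rfl | rfl
  · exact hg₁.notMem_of_sub_eq' (k := 2) (by push_cast; ring) two_pos (by omega) hxS
  · exact hg₁.notMem_of_sub_eq' (k := 1) (by push_cast; ring) one_pos (by omega) hxS
  · exact hg₂.notMem_of_sub_eq (k := 1) (by push_cast; ring) one_pos (by omega) hxS
  · exact hg₂.notMem_of_sub_eq (k := 2) (by push_cast; ring) two_pos (by omega) hxS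

/-- A gap with at least three vertices leaves its second vertex undominated, and undominated
vertices are pairwise adjacent. -/
theorem IsGap.eq_of_three_le_gapSize
    (hcl : (cycleGraph n).IsClique {u | ¬ (cycleGraph n).Dominates S u}) {i' j' : Fin n}
    (hg : IsGap S i j) (hg' : IsGap S i' j') (h3 : 3 ≤ gapSize i j) (h3' : 3 ≤ gapSize i' j') :
    i = i' ∧ j = j' := by
  unfold gapSize at h3 h3'
  obtain rfl : i = i' := by
    by_contra hne
    have hadj := hcl (hg.not_dominates (by omega)) (hg'.not_dominates (by omega))
      (fun h => hne (by linear_combination h))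
    rw [cycleGraph_adj_iff (by have := (j - i).isLt; omega)] at hadj
    rcases hadj with h | h
    · exact hg'.notMem_of_sub_eq (k := 1) (by push_cast; linear_combination h) one_pos
        (by omega) hg.1
    · exact hg.notMem_of_sub_eq (k := 1) (by push_cast; linear_combination h) one_pos
        (by omega) hg'.1
  exact ⟨rfl, hg.right_unique hg'⟩

end Gap

section Surgery

open Fin.CommRing

variable {n : ℕ} [NeZero n] {S : Finset (Fin n)} {i : Fin n}

lemma Fin.eq_add_of_val_sub_eq {a b : Fin n} {k : ℕ} (h : (b - a).val = k) : b = a + k := by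
  rw [← h, Fin.cast_val_eq_self]
  ring

lemma IsGap.eq_of_not_dominates (hn : 5 ≤ n)
    (hcl : (cycleGraph n).IsClique {u | ¬ (cycleGraph n).Dominates S u})
    (hg : IsGap S i (i + 4)) {z : Fin n} (hz : ¬ (cycleGraph n).Dominates S z) : z = i + 2 := by
  have h4 : (i + 4 - i).val = 4 := by simp [Nat.mod_eq_of_lt (by omega : 4 < n)]
  by_contra hne
  have hadj := hcl hz (hg.not_dominates h4.ge) hne
  rw [cycleGraph_adj_iff (by omega)] at hadj
  rcases hadj with h | h
  · exact hz ⟨i + 4, hg.2.1, (mem_closedNeighborSet_cycleGraph (by omega)).2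
      (Or.inr (Or.inr (by linear_combination -h)))⟩
  · exact hz ⟨i, hg.1, (mem_closedNeighborSet_cycleGraph (by omega)).2
      (Or.inl (by linear_combination h))⟩

lemma IsGap.add_six_mem (hn : 5 ≤ n) (hS : HitsPuncturedBalls S) (hg : IsGap S i (i + 4))
    (h5 : i + 5 ∉ S) : i + 6 ∈ S := by
  have h4 : (i + 4 - i).val = 4 := by simp [Nat.mod_eq_of_lt (by omega : 4 < n)]
  obtain ⟨x, hxS, hx⟩ := hS (i + 4)
  rw [mem_puncturedBall] at hx
  rcases hx with rfl | rfl | rfl | rfl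
  · exact absurd hxS (hg.notMem_of_sub_eq (k := 2) (by push_cast; ring) two_pos (by omega))
  · exact absurd hxS (hg.notMem_of_sub_eq (k := 3) (by push_cast; ring) three_pos (by omega))
  · exact absurd (show i + 5 ∈ S by convert hxS using 1; ring) h5
  · convert hxS using 1; ring

/-- The witness is `S` with `i + 4` moved to `i + 3`. -/
lemma IsGap.exists_of_add_five_mem (hn : 5 ≤ n) (hS : HitsPuncturedBalls S)
    (hcl : (cycleGraph n).IsClique {u | ¬ (cycleGraph n).Dominates S u})
    (hg : IsGap S i (i + 4)) (h5 : i + 5 ∈ S) :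
    ∃ T : Finset (Fin n), T.card = S.card ∧ HitsPuncturedBalls T ∧
      ∀ z, (cycleGraph n).Dominates T z := by
  have h4 : (i + 4 - i).val = 4 := by simp [Nat.mod_eq_of_lt (by omega : 4 < n)]
  have hN : ∀ {u y : Fin n},
      y ∈ (cycleGraph n).closedNeighborSet u ↔ y = u - 1 ∨ y = u ∨ y = u + 1 :=
    mem_closedNeighborSet_cycleGraph (by omega)
  set T := insert (i + 3) (S.erase (i + 4))
  have hST : S.erase (i + 4) ⊆ T := Finset.subset_insert _ _
  have h3T : i + 3 ∈ T := Finset.mem_insert_self _ _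
  have h5T : i + 5 ∈ T := hST (Finset.mem_erase.2
    ⟨Fin.ne_of_sub_eq_natCast (k := 1) one_pos (by omega) (by push_cast; ring), h5⟩)
  have hiT : i ∈ T := hST (Finset.mem_erase.2
    ⟨(Fin.ne_of_sub_eq_natCast (k := 4) four_pos (by omega) (by push_cast; ring)).symm, hg.1⟩)
  refine ⟨T, ?_, hS.of_erase_subset hST fun u hu => ?_, fun z => ?_⟩
  · rw [Finset.card_insert_of_notMem (fun h => hg.notMem_of_sub_eq (k := 3)
      (by push_cast; ring) three_pos (by omega) (Finset.mem_of_mem_erase h)),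
      Finset.card_erase_add_one hg.2.1]
  · rw [mem_puncturedBall] at hu
    rcases hu with h | h | h | h
    · exact ⟨i + 5, h5T, mem_puncturedBall.2 (Or.inr (Or.inl (by linear_combination h)))⟩
    · exact ⟨i + 3, h3T, mem_puncturedBall.2 (Or.inl (by linear_combination h))⟩
    · exact ⟨i + 5, h5T, mem_puncturedBall.2 (Or.inr (Or.inr (Or.inr
        (by linear_combination h))))⟩
    · exact ⟨i, hiT, mem_puncturedBall.2 (Or.inl (by linear_combination h))⟩
  by_cases hz : (cycleGraph n).Dominates S z
  · refine hz.of_erase_subset hST fun hj => ?_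
    rw [mem_closedNeighborSet_comm, hN] at hj
    rcases hj with rfl | rfl | rfl
    · exact ⟨i + 3, h3T, hN.2 (Or.inr (Or.inl (by ring)))⟩
    · exact ⟨i + 3, h3T, hN.2 (Or.inl (by ring))⟩
    · exact ⟨i + 5, h5T, hN.2 (Or.inr (Or.inl (by ring)))⟩
  · obtain rfl := hg.eq_of_not_dominates hn hcl hz
    exact ⟨i + 3, h3T, hN.2 (Or.inr (Or.inr (by ring)))⟩

/-- The witness is `S` with `i + 4` moved to `i + 5`. -/
lemma IsGap.exists_of_add_five_notMem (hn : 5 ≤ n) (hS : HitsPuncturedBalls S)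
    (hcl : (cycleGraph n).IsClique {u | ¬ (cycleGraph n).Dominates S u})
    (hg : IsGap S i (i + 4)) (h5 : i + 5 ∉ S) :
    ∃ T : Finset (Fin n), T.card = S.card ∧ HitsPuncturedBalls T ∧
      i + 1 ∉ T ∧ i + 4 ∉ T ∧
      ∀ z, ¬ (cycleGraph n).Dominates T z → z = i + 2 ∨ z = i + 3 := by
  have h4 : (i + 4 - i).val = 4 := by simp [Nat.mod_eq_of_lt (by omega : 4 < n)]
  have hN : ∀ {u y : Fin n},
      y ∈ (cycleGraph n).closedNeighborSet u ↔ y = u - 1 ∨ y = u ∨ y = u + 1 :=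
    mem_closedNeighborSet_cycleGraph (by omega)
  have h6 := hg.add_six_mem hn hS h5
  set T := insert (i + 5) (S.erase (i + 4))
  have hST : S.erase (i + 4) ⊆ T := Finset.subset_insert _ _
  have h5T : i + 5 ∈ T := Finset.mem_insert_self _ _
  have h6T : i + 6 ∈ T := hST (Finset.mem_erase.2
    ⟨Fin.ne_of_sub_eq_natCast (k := 2) two_pos (by omega) (by push_cast; ring), h6⟩)
  have hiT : i ∈ T := hST (Finset.mem_erase.2
    ⟨(Fin.ne_of_sub_eq_natCast (k := 4) four_pos (by omega) (by push_cast; ring)).symm, hg.1⟩)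
  refine ⟨T, ?_, hS.of_erase_subset hST fun u hu => ?_, ?_, ?_, fun z hz => ?_⟩
  · rw [Finset.card_insert_of_notMem (fun h => h5 (Finset.mem_of_mem_erase h)),
      Finset.card_erase_add_one hg.2.1]
  · rw [mem_puncturedBall] at hu
    rcases hu with h | h | h | h
    · exact ⟨i + 5, h5T, mem_puncturedBall.2 (Or.inr (Or.inl (by linear_combination h)))⟩
    · exact ⟨i + 6, h6T, mem_puncturedBall.2 (Or.inr (Or.inr (Or.inl
        (by linear_combination h))))⟩
    · exact ⟨i + 5, h5T, mem_puncturedBall.2 (Or.inr (Or.inr (Or.inr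
        (by linear_combination h))))⟩
    · exact ⟨i, hiT, mem_puncturedBall.2 (Or.inl (by linear_combination h))⟩
  · rw [Finset.mem_insert, Finset.mem_erase, not_or]
    exact ⟨Fin.ne_of_sub_eq_natCast (k := 4) four_pos (by omega) (by push_cast; ring) ∘ Eq.symm,
      fun h => hg.notMem_of_sub_eq (k := 1) (by push_cast; ring) one_pos (by omega) h.2⟩
  · rw [Finset.mem_insert, Finset.mem_erase, not_or]
    exact ⟨Fin.ne_of_sub_eq_natCast (k := 1) one_pos (by omega) (by push_cast; ring) ∘ Eq.symm,
      fun h => h.1 rfl⟩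
  by_contra! hne
  by_cases hzS : (cycleGraph n).Dominates S z
  · refine hz (hzS.of_erase_subset hST fun hj => ?_)
    rw [mem_closedNeighborSet_comm, hN] at hj
    rcases hj with rfl | rfl | rfl
    · exact absurd (by ring) hne.2
    · exact ⟨i + 5, h5T, hN.2 (Or.inr (Or.inr (by ring)))⟩
    · exact ⟨i + 5, h5T, hN.2 (Or.inr (Or.inl (by ring)))⟩
  · exact hne.1 (hg.eq_of_not_dominates hn hcl hzS)

theorem exists_card_eq_no_gapSize_three (hn : 5 ≤ n) (hS : HitsPuncturedBalls S)
    (hcl : (cycleGraph n).IsClique {u | ¬ (cycleGraph n).Dominates S u}) :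
    ∃ T : Finset (Fin n), T.card = S.card ∧ HitsPuncturedBalls T ∧
      (cycleGraph n).IsClique {u | ¬ (cycleGraph n).Dominates T u} ∧
      ∀ a b, IsGap T a b → gapSize a b ≠ 3 := by
  by_cases h : ∃ i j, IsGap S i j ∧ gapSize i j = 3
  swap
  · exact ⟨S, rfl, hS, hcl, fun a b hab h3 => h ⟨a, b, hab, h3⟩⟩
  obtain ⟨i, j, hg, h3⟩ := h
  obtain rfl : j = i + 4 := by
    simpa using Fin.eq_add_of_val_sub_eq (k := 4) (by unfold gapSize at h3; omega)
  by_cases h5 : i + 5 ∈ S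
  · obtain ⟨T, hcard, hT, hdom⟩ := hg.exists_of_add_five_mem hn hS hcl h5
    exact ⟨T, hcard, hT, fun u hu => absurd (hdom u) hu,
      fun a b hab h3 => hab.not_dominates (by unfold gapSize at h3; omega) (hdom _)⟩
  obtain ⟨T, hcard, hT, h1, h4, hundom⟩ := hg.exists_of_add_five_notMem hn hS hcl h5
  refine ⟨T, hcard, hT, fun u hu v hv huv => ?_, fun a b hab h3 => ?_⟩
  · rw [cycleGraph_adj_iff (by omega)]
    rcases hundom u hu with rfl | rfl <;> rcases hundom v hv with rfl | rfl
    · exact absurd rfl huv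
    · exact Or.inr (by ring)
    · exact Or.inl (by ring)
    · exact absurd rfl huv
  have hb : b = a + 4 := by
    simpa using Fin.eq_add_of_val_sub_eq (k := 4) (by unfold gapSize at h3; omega)
  rcases hundom _ (hab.not_dominates (by unfold gapSize at h3; omega)) with h | h
  · obtain rfl : a = i := by linear_combination h
    exact h4 (hb ▸ hab.2.1)
  · obtain rfl : a = i + 1 := by linear_combination h
    exact h1 hab.1

end Surgery

/-- For `n ≥ 7`, the wheel `W_{1,n}` has a nonlocal metric basis
`S' ⊆ V(Cₙ)` all of whose gaps have at most `4` vertices, with at most one gap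
of `3` or more vertices, such that gaps of at least `2` vertices have
neighboring gaps with at most one vertex, and with no gap of size exactly `3`. -/
theorem stmt_12 (n : ℕ) (hn : 7 ≤ n) :
    ∃ S : Finset (Fin n),
      IsNLResolving (wheel n) (S.image some) ∧
      (S.image some).card = nldim (wheel n) ∧
      (∀ i j : Fin n, IsGap S i j → gapSize i j ≤ 4) ∧
      (∀ i j i' j' : Fin n, IsGap S i j → IsGap S i' j' →
        3 ≤ gapSize i j → 3 ≤ gapSize i' j' → i = i' ∧ j = j') ∧
      (∀ i j : Fin n, IsGap S i j → 2 ≤ gapSize i j →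
        (∀ h : Fin n, IsGap S h i → gapSize h i ≤ 1) ∧
        (∀ k : Fin n, IsGap S j k → gapSize j k ≤ 1)) ∧
      (∀ i j : Fin n, IsGap S i j → gapSize i j ≠ 3) := by
  have : NeZero n := ⟨by omega⟩
  have hsep := separatesClosedNeighborSets_cycleGraph_iff (n := n) (by omega)
  obtain ⟨X, hXcard, hX⟩ := Nat.sInf_mem
    (s := {k | ∃ X : Finset (Option (Fin n)), X.card = k ∧ IsNLResolving (wheel n) X})
    ⟨_, Finset.univ.image some, rfl, by
      rw [wheel, isNLResolving_joinK1_iff, Finset.eraseNone_image_some]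
      exact separatesClosedNeighborSets_univ⟩
  obtain ⟨hS, hcl⟩ := (hsep _).1 ((isNLResolving_joinK1_iff _ X).1 hX)
  obtain ⟨T, hcard, hT, hTcl, hT3⟩ := exists_card_eq_no_gapSize_three (by omega) hS hcl
  have hTres : IsNLResolving (wheel n) (T.image some) := by
    rw [wheel, isNLResolving_joinK1_iff, Finset.eraseNone_image_some]
    exact (hsep T).2 ⟨hT, hTcl⟩
  refine ⟨T, hTres, le_antisymm ?_ (Nat.sInf_le ⟨_, rfl, hTres⟩),
    fun i j hg => gapSize_le_four hT hg, fun i j i' j' => IsGap.eq_of_three_le_gapSize hTcl,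
    fun i j hg h2 => ⟨fun h hh => ?_, fun k hk => ?_⟩, hT3⟩
  · rw [Finset.card_image_of_injective _ (Option.some_injective _), hcard]
    refine (Finset.card_eraseNone_le X).trans_eq hXcard
  · exact (gapSize_le_one_or hT hh hg).resolve_right (by omega)
  · exact (gapSize_le_one_or hT hg hk).resolve_left (by omega)
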